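/- arXiv:1209.1135 — 2 statements merged into one kernel-verified Lean document; each statement's English description precedes it below -/
import Mathlib

section
/- The element v satisfies: (1) v is invertible in A, with inverse v⁻¹ = (1/N)·(Σ_{k=0}^{N−1} (−1)^k t^{−k²})·(Σ_{j=0}^{N−1} (−1)^j t^{j²} K^{2j+N}); (2) S(v) = v, where S is the antipode of A; (3) Δ(v) = P(R)·R·(v ⊗ v), where Δ is the comultiplication of A and P : A ⊗ A → A ⊗ A is the flip x ⊗ y ↦ y ⊗ x. (These are the defining identities making (A, R, v) a ribbon Hopf algebra.) -/
open Finset TensorProduct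

noncomputable section

/-- The quantum group `U_t(u(1)) = ℂ[ℤ_{2N}]`, the complex group algebra of the cyclic group
`ℤ_{2N}`. -/
abbrev QG (N : ℕ) := MonoidAlgebra ℂ (Multiplicative (ZMod (2 * N)))

/-- The basis element `K^j`, `j ∈ ℤ_{2N}` (`K` is the image of the fixed generator `1`). -/
def KK (N : ℕ) (j : ZMod (2 * N)) : QG N :=
  MonoidAlgebra.single (Multiplicative.ofAdd j) 1

/-- `t = exp(πi/N)`, a primitive `2N`-th root of unity. -/
def tq (N : ℕ) : ℂ := Complex.exp ((Real.pi : ℂ) * Complex.I / N)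

/-- The universal `R`-matrix `R = (1/2N) Σ_{j,k ∈ ℤ_{2N}} t^{−jk} K^j ⊗ K^k`. -/
def Rmat (N : ℕ) : QG N ⊗[ℂ] QG N :=
  (2 * (N : ℂ))⁻¹ • ∑ j ∈ Finset.range (2 * N), ∑ k ∈ Finset.range (2 * N),
    tq N ^ (-((j : ℤ) * (k : ℤ))) • (KK N (j : ZMod (2 * N)) ⊗ₜ[ℂ] KK N (k : ZMod (2 * N)))

/-- The comultiplication `Δ : A → A ⊗ A`, `Δ(K^j) = K^j ⊗ K^j`. -/
def DeltaQG (N : ℕ) : QG N →ₐ[ℂ] QG N ⊗[ℂ] QG N :=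
  (MonoidAlgebra.lift ℂ (QG N ⊗[ℂ] QG N) (Multiplicative (ZMod (2 * N))))
    { toFun := fun x => MonoidAlgebra.single x 1 ⊗ₜ[ℂ] MonoidAlgebra.single x 1
      map_one' := by
        simp [MonoidAlgebra.one_def, Algebra.TensorProduct.one_def]
      map_mul' := fun x y => by
        simp only [Algebra.TensorProduct.tmul_mul_tmul, MonoidAlgebra.single_mul_single,
          one_mul] }

/-- The antipode `S : A → A`, `S(K^j) = K^{−j}`. -/
def SQG (N : ℕ) : QG N →ₐ[ℂ] QG N :=
  (MonoidAlgebra.lift ℂ (QG N) (Multiplicative (ZMod (2 * N))))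
    { toFun := fun x => MonoidAlgebra.single x⁻¹ 1
      map_one' := by simp [MonoidAlgebra.one_def]
      map_mul' := fun x y => by
        simp only [mul_inv, MonoidAlgebra.single_mul_single, one_mul] }

/-- The universal twist `v = (1/2N) Σ_{j,k ∈ ℤ_{2N}} t^{(k+j)k} K^j`. -/
def vel (N : ℕ) : QG N :=
  (2 * (N : ℂ))⁻¹ • ∑ j ∈ Finset.range (2 * N), ∑ k ∈ Finset.range (2 * N),
    tq N ^ ((k + j) * k) • KK N (j : ZMod (2 * N))

/-- The claimed inverse
`v⁻¹ = (1/N)·(Σ_{k=0}^{N−1} (−1)^k t^{−k²})·(Σ_{j=0}^{N−1} (−1)^j t^{j²} K^{2j+N})`. -/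
def velInv (N : ℕ) : QG N :=
  ((N : ℂ)⁻¹ * ∑ k ∈ Finset.range N, (-1 : ℂ) ^ k * tq N ^ (-((k : ℤ) ^ 2))) •
    ∑ j ∈ Finset.range N, ((-1 : ℂ) ^ j * tq N ^ (j ^ 2)) • KK N ((2 * j + N : ℕ) : ZMod (2 * N))

/-!
Everything diagonalises in the Fourier idempotents `e m = (1/2N) Σ_j t^{-mj} K^j`, `m ∈ ℤ_{2N}`,
a complete family of orthogonal idempotents with `K^j = Σ_m t^{mj} e m`. In this basis
`v = Σ_m t^{m²} e m`, `R = Σ_{a,b} t^{ab} e a ⊗ e b`, `Δ(e m) = Σ_{a+b=m} e a ⊗ e b` and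
`S(e m) = e (-m)`, so `S(v) = v` and `Δ(v) = P(R) R (v ⊗ v)` come down to
`(a + b)² = a² + 2ab + b²`. The stated inverse is `Σ_m t^{-m²} e m`: completing the square, its
coefficients are quadratic Gauss sums over half a period (for even `N`, `x ↦ t^{x²}` has period
`N`), and the Gauss sums of `t^{x²}` and `t^{-x²}` multiply to `4N`.
-/

section OrthogonalIdempotents

variable {R A : Type*} [CommSemiring R] [Semiring A] [Algebra R A] {I : Type*} {e : I → A}

theorem OrthogonalIdempotents.sum_smul_mul_sum_smul [Fintype I] (he : OrthogonalIdempotents e)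
    (f g : I → R) : (∑ i, f i • e i) * (∑ i, g i • e i) = ∑ i, (f i * g i) • e i := by
  classical
  simp_rw [Finset.sum_mul_sum, smul_mul_smul_comm, he.mul_eq, smul_ite, smul_zero,
    Finset.sum_ite_eq, Finset.mem_univ, if_true]

theorem OrthogonalIdempotents.tmul {B J : Type*} [Semiring B] [Algebra R B] {f : J → B}
    (he : OrthogonalIdempotents e) (hf : OrthogonalIdempotents f) :
    OrthogonalIdempotents fun p : I × J => e p.1 ⊗ₜ[R] f p.2 where
  idem p := by
    rw [IsIdempotentElem, Algebra.TensorProduct.tmul_mul_tmul, (he.idem p.1).eq, (hf.idem p.2).eq]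
  ortho p q hpq := by
    simp only [Algebra.TensorProduct.tmul_mul_tmul]
    by_cases h : p.1 = q.1
    · rw [hf.ortho fun h' => hpq (Prod.ext h h'), tmul_zero]
    · rw [he.ortho h, zero_tmul]

theorem TensorProduct.sum_smul_tmul_sum_smul {M P I J : Type*} [AddCommMonoid M] [Module R M]
    [AddCommMonoid P] [Module R P] [Fintype I] [Fintype J] (f : I → R) (g : J → R) (x : I → M)
    (y : J → P) :
    (∑ i, f i • x i) ⊗ₜ[R] (∑ j, g j • y j) = ∑ p : I × J, (f p.1 * g p.2) • (x p.1 ⊗ₜ y p.2) := by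
  simp only [sum_tmul, tmul_sum, smul_tmul_smul, Fintype.sum_prod_type]
  exact Finset.sum_comm

end OrthogonalIdempotents

section FourierIdempotent

variable {n : ℕ} [NeZero n] (ψ : AddChar (ZMod n) ℂ)

local notation "A" => MonoidAlgebra ℂ (Multiplicative (ZMod n))
local notation "δ" j:max => MonoidAlgebra.single (Multiplicative.ofAdd j) (1 : ℂ)

def fourierIdempotent (m : ZMod n) : A :=
  (n : ℂ)⁻¹ • ∑ j, ψ (-(m * j)) • δ j

variable {ψ}

theorem sum_addChar_mul (hψ : ψ.IsPrimitive) (b : ZMod n) :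
    ∑ x, ψ (x * b) = if b = 0 then (n : ℂ) else 0 := by
  rw [AddChar.sum_mulShift b hψ, ZMod.card]
  split_ifs <;> simp

theorem fourierIdempotent_mul_single (a k : ZMod n) :
    fourierIdempotent ψ a * δ k = ψ (a * k) • fourierIdempotent ψ a := by
  simp only [fourierIdempotent, smul_mul_assoc, Finset.sum_mul, MonoidAlgebra.single_mul_single,
    ← ofAdd_add, mul_one, Finset.smul_sum, smul_smul]
  refine Fintype.sum_equiv (Equiv.addRight k) _ _ fun j => ?_
  simp only [Equiv.coe_addRight]
  rw [mul_left_comm, ← AddChar.map_add_eq_mul]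
  ring_nf

theorem fourierIdempotent_mul (hψ : ψ.IsPrimitive) (a b : ZMod n) :
    fourierIdempotent ψ a * fourierIdempotent ψ b =
      if a = b then fourierIdempotent ψ a else 0 := by
  calc fourierIdempotent ψ a * fourierIdempotent ψ b
      = ((n : ℂ)⁻¹ * ∑ j, ψ (j * (a - b))) • fourierIdempotent ψ a := by
        nth_rewrite 2 [fourierIdempotent]
        simp only [mul_smul_comm, Finset.mul_sum, fourierIdempotent_mul_single, smul_smul,
          ← Finset.sum_smul, ← AddChar.map_add_eq_mul]
        congr 2
        funext j
        ring_nf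
    _ = if a = b then fourierIdempotent ψ a else 0 := by
        simp only [sum_addChar_mul hψ, sub_eq_zero]
        split_ifs <;> simp [NeZero.ne]

theorem single_eq_sum_fourierIdempotent (hψ : ψ.IsPrimitive) (j : ZMod n) :
    δ j = ∑ m, ψ (m * j) • fourierIdempotent ψ m := by
  simp only [fourierIdempotent, Finset.smul_sum, smul_smul]
  rw [Finset.sum_comm]
  simp only [← Finset.sum_smul, mul_left_comm _ (n : ℂ)⁻¹, ← Finset.mul_sum,
    ← AddChar.map_add_eq_mul]
  have key : ∀ m k : ZMod n, m * j + -(m * k) = m * (j - k) := fun m k => by ring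
  simp only [key, sum_addChar_mul hψ, sub_eq_zero, mul_ite, mul_zero,
    inv_mul_cancel₀ (NeZero.ne (n : ℂ)), ite_smul, zero_smul, one_smul]
  simp

theorem sum_fourierIdempotent (hψ : ψ.IsPrimitive) : ∑ m, fourierIdempotent ψ m = 1 := by
  simpa [MonoidAlgebra.one_def] using (single_eq_sum_fourierIdempotent hψ 0).symm

theorem completeOrthogonalIdempotents_fourierIdempotent (hψ : ψ.IsPrimitive) :
    CompleteOrthogonalIdempotents (fourierIdempotent ψ) :=
  ⟨OrthogonalIdempotents.iff_mul_eq.2 (fourierIdempotent_mul hψ), sum_fourierIdempotent hψ⟩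

theorem map_fourierIdempotent_eq_sum_tmul (hψ : ψ.IsPrimitive) {F : Type*}
    [FunLike F A (A ⊗[ℂ] A)] [LinearMapClass F ℂ A (A ⊗[ℂ] A)] (Δ : F)
    (hΔ : ∀ j, Δ (δ j) = δ j ⊗ₜ δ j) (m : ZMod n) :
    Δ (fourierIdempotent ψ m) = ∑ a, fourierIdempotent ψ a ⊗ₜ fourierIdempotent ψ (m - a) := by
  calc Δ (fourierIdempotent ψ m)
      = ∑ a, ∑ b, ((n : ℂ)⁻¹ * ∑ j, ψ (j * (a + b - m))) •
          (fourierIdempotent ψ a ⊗ₜ fourierIdempotent ψ b) := by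
        conv_lhs => rw [fourierIdempotent]
        simp only [map_smul, map_sum, hΔ]
        simp only [single_eq_sum_fourierIdempotent hψ, sum_tmul, tmul_sum, smul_tmul_smul,
          Finset.smul_sum, smul_smul]
        rw [Finset.sum_comm]
        refine (Finset.sum_congr rfl fun b _ => Finset.sum_comm).trans ?_
        rw [Finset.sum_comm]
        refine Finset.sum_congr rfl fun a _ => Finset.sum_congr rfl fun b _ => ?_
        rw [Finset.mul_sum, Finset.sum_smul]
        refine Finset.sum_congr rfl fun j _ => ?_
        rw [← AddChar.map_add_eq_mul, ← AddChar.map_add_eq_mul]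
        ring_nf
    _ = _ := by
        simp only [sum_addChar_mul hψ, sub_eq_zero, ← eq_sub_iff_add_eq', mul_ite, mul_zero,
          inv_mul_cancel₀ (NeZero.ne (n : ℂ)), ite_smul, zero_smul, one_smul, Finset.sum_ite_eq',
          Finset.mem_univ, if_true]

theorem map_sum_smul_fourierIdempotent_eq_sum_tmul (hψ : ψ.IsPrimitive) {F : Type*}
    [FunLike F A (A ⊗[ℂ] A)] [LinearMapClass F ℂ A (A ⊗[ℂ] A)] (Δ : F)
    (hΔ : ∀ j, Δ (δ j) = δ j ⊗ₜ δ j) (f : ZMod n → ℂ) :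
    Δ (∑ m, f m • fourierIdempotent ψ m) =
      ∑ p : ZMod n × ZMod n, f (p.1 + p.2) •
        (fourierIdempotent ψ p.1 ⊗ₜ fourierIdempotent ψ p.2) := by
  simp only [map_sum, map_smul, map_fourierIdempotent_eq_sum_tmul hψ Δ hΔ, Fintype.sum_prod_type,
    Finset.smul_sum]
  rw [Finset.sum_comm]
  refine Finset.sum_congr rfl fun a _ => ?_
  exact Fintype.sum_equiv (Equiv.subRight a) _ _ fun m => by simp

theorem map_fourierIdempotent_eq_fourierIdempotent_neg {F : Type*} [FunLike F A A]
    [LinearMapClass F ℂ A A] (S : F) (hS : ∀ j, S (δ j) = δ (-j)) (m : ZMod n) :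
    S (fourierIdempotent ψ m) = fourierIdempotent ψ (-m) := by
  simp only [fourierIdempotent, map_smul, map_sum, hS]
  congr 1
  refine Fintype.sum_equiv (Equiv.neg _) _ _ fun j => ?_
  simp

end FourierIdempotent

theorem Finset.sum_range_eq_sum_zmod {M : Type*} [AddCommMonoid M] {n : ℕ} [NeZero n]
    {f : ℕ → M} {g : ZMod n → M} (hfg : ∀ j, f j = g j) : ∑ j ∈ range n, f j = ∑ x, g x :=
  Finset.sum_nbij' (↑) ZMod.val (fun _ _ => mem_univ _) (fun x _ => mem_range.2 x.val_lt)
    (fun _ hj => ZMod.val_cast_of_lt (mem_range.1 hj)) (fun x _ => ZMod.natCast_zmod_val x)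
    fun j _ => hfg j

section RibbonElement

local notation "ψ" => ZMod.stdAddChar

variable {N : ℕ}

theorem DeltaQG_single (j : ZMod (2 * N)) : DeltaQG N (KK N j) = KK N j ⊗ₜ KK N j := by
  simp only [DeltaQG, KK, MonoidAlgebra.lift_single, one_smul]
  rfl

theorem SQG_single (j : ZMod (2 * N)) : SQG N (KK N j) = KK N (-j) := by
  simp only [SQG, KK, MonoidAlgebra.lift_single, one_smul]
  rfl

theorem two_mul_natCast_self_eq_zero : 2 * (N : ZMod (2 * N)) = 0 := by
  exact_mod_cast ZMod.natCast_self (2 * N)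

theorem natCast_self_mul_self_eq_zero (hN : Even N) : (N : ZMod (2 * N)) * N = 0 := by
  obtain ⟨h, hh⟩ := hN
  exact_mod_cast (ZMod.natCast_eq_zero_iff _ _).2 ⟨h, by rw [hh]; ring⟩

variable [NeZero N]

theorem tq_zpow (k : ℤ) : tq N ^ k = ψ (k : ZMod (2 * N)) := by
  rw [ZMod.stdAddChar_coe, tq, ← Complex.exp_int_mul]
  congr 1
  push_cast
  field_simp

theorem tq_pow (k : ℕ) : tq N ^ k = ψ (k : ZMod (2 * N)) := by
  simpa using tq_zpow (N := N) k

theorem stdAddChar_natCast_self : ψ (N : ZMod (2 * N)) = -1 := by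
  rw [← tq_pow, tq, ← Complex.exp_nat_mul, ← Complex.exp_pi_mul_I]
  congr 1
  field_simp [NeZero.ne (N : ℂ)]

theorem two_mul_eq_zero_iff {d : ZMod (2 * N)} : 2 * d = 0 ↔ d = 0 ∨ d = N := by
  refine ⟨fun hd => ?_, ?_⟩
  · have hdvd : 2 * N ∣ 2 * d.val := by
      rw [← ZMod.natCast_eq_zero_iff]
      push_cast
      rwa [ZMod.natCast_zmod_val]
    obtain ⟨c, hc⟩ := Nat.dvd_of_mul_dvd_mul_left two_pos hdvd
    have hc2 : c < 2 :=
      Nat.lt_of_mul_lt_mul_left (a := N) (by rw [← hc, mul_comm N 2]; exact d.val_lt)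
    interval_cases c
    · left
      rwa [mul_zero, ZMod.val_eq_zero] at hc
    · right
      rw [← ZMod.natCast_zmod_val d, hc, mul_one]
  · rintro (rfl | rfl)
    · exact mul_zero 2
    · exact two_mul_natCast_self_eq_zero

theorem natCast_self_ne_zero : (N : ZMod (2 * N)) ≠ 0 := by
  rw [Ne, ZMod.natCast_eq_zero_iff]
  intro h
  have hpos := Nat.pos_of_neZero N
  have := Nat.le_of_dvd hpos h
  omega

theorem sum_eq_two_nsmul_sum_range_of_periodic {M : Type*} [AddCommMonoid M]
    (f : ZMod (2 * N) → M) (hf : ∀ x, f (x + N) = f x) : ∑ x, f x = 2 • ∑ j ∈ range N, f j := by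
  rw [← Finset.sum_range_eq_sum_zmod fun _ => rfl,
    show range (2 * N) = range (N + N) by rw [two_mul], Finset.sum_range_add, two_nsmul]
  congr 1
  refine Finset.sum_congr rfl fun j _ => ?_
  rw [Nat.cast_add, add_comm, hf]

variable (N) in
def quadGaussSum (s : ZMod (2 * N)) : ℂ := ∑ x : ZMod (2 * N), ψ (s * x * x)

theorem sum_range_stdAddChar_quadratic (hN : Even N) (s b c : ZMod (2 * N)) :
    ∑ j ∈ range N, ψ (s * ((j : ZMod (2 * N)) + b) * ((j : ZMod (2 * N)) + b) + c) =
      2⁻¹ * ψ c * quadGaussSum N s := by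
  have hperiodic := sum_eq_two_nsmul_sum_range_of_periodic
    (fun x : ZMod (2 * N) => ψ (s * (x + b) * (x + b) + c)) fun x => by
      congr 1
      linear_combination
        s * (x + b) * two_mul_natCast_self_eq_zero + s * natCast_self_mul_self_eq_zero hN
  have hshift : ∑ x, ψ (s * (x + b) * (x + b) + c) = ψ c * quadGaussSum N s := by
    rw [quadGaussSum, Finset.mul_sum]
    exact Fintype.sum_equiv (Equiv.addRight b) _ _ fun x => by
      rw [AddChar.map_add_eq_mul, mul_comm, Equiv.coe_addRight]
  rw [hshift, nsmul_eq_mul, Nat.cast_ofNat] at hperiodic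
  linear_combination (-(2 : ℂ)⁻¹) * hperiodic

theorem quadGaussSum_one_mul_quadGaussSum_neg_one (hN : Even N) :
    quadGaussSum N 1 * quadGaussSum N (-1) = 4 * N := by
  have hψ := ZMod.isPrimitive_stdAddChar (2 * N)
  calc quadGaussSum N 1 * quadGaussSum N (-1)
      = ∑ d : ZMod (2 * N), ψ (d * d) * ∑ y : ZMod (2 * N), ψ (y * (2 * d)) := by
        rw [quadGaussSum, quadGaussSum, Finset.sum_mul_sum, Finset.sum_comm]
        simp_rw [Finset.mul_sum]
        conv_rhs => rw [Finset.sum_comm]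
        refine Finset.sum_congr rfl fun y _ => Fintype.sum_equiv (Equiv.subRight y) _ _ fun x => ?_
        rw [← AddChar.map_add_eq_mul, ← AddChar.map_add_eq_mul, Equiv.subRight_apply]
        ring_nf
    _ = ∑ d : ZMod (2 * N), if 2 * d = 0 then ψ (d * d) * (2 * N) else 0 := by
        simp only [sum_addChar_mul hψ, mul_ite, mul_zero]
        push_cast
        rfl
    _ = ψ ((0 : ZMod (2 * N)) * 0) * (2 * N) +
          ψ ((N : ZMod (2 * N)) * (N : ZMod (2 * N))) * (2 * N) := by
        have : univ.filter (fun d : ZMod (2 * N) => 2 * d = 0) = {0, (N : ZMod (2 * N))} := by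
          ext d
          simp [two_mul_eq_zero_iff]
        rw [← Finset.sum_filter, this, Finset.sum_pair natCast_self_ne_zero.symm]
    _ = 4 * N := by
        rw [mul_zero, natCast_self_mul_self_eq_zero hN, AddChar.map_zero_eq_one]
        ring

theorem vel_eq_sum_fourierIdempotent :
    vel N = ∑ m, ψ (m * m) • fourierIdempotent ψ m := by
  calc vel N = ∑ k : ZMod (2 * N), ψ (k * k) • fourierIdempotent ψ (-k) := by
        rw [vel, Finset.sum_comm]
        simp only [fourierIdempotent, Finset.smul_sum, smul_smul]
        refine Finset.sum_range_eq_sum_zmod fun k => Finset.sum_range_eq_sum_zmod fun j => ?_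
        congr 1
        rw [tq_pow, mul_left_comm, ← AddChar.map_add_eq_mul]
        push_cast
        ring_nf
    _ = _ := Fintype.sum_equiv (Equiv.neg _) _ _ fun k => by simp

theorem Rmat_eq_sum_fourierIdempotent :
    Rmat N = ∑ p : ZMod (2 * N) × ZMod (2 * N), ψ (p.1 * p.2) •
      (fourierIdempotent ψ p.1 ⊗ₜ fourierIdempotent ψ p.2) := by
  calc Rmat N = ∑ j : ZMod (2 * N), KK N j ⊗ₜ fourierIdempotent ψ j := by
        simp only [Rmat, fourierIdempotent, tmul_smul, tmul_sum, Finset.smul_sum, smul_smul]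
        refine Finset.sum_range_eq_sum_zmod fun j => Finset.sum_range_eq_sum_zmod fun k => ?_
        congr 1
        rw [tq_zpow]
        push_cast
        ring_nf
    _ = _ := by
        rw [Fintype.sum_prod_type, Finset.sum_comm]
        simp only [KK, single_eq_sum_fourierIdempotent (ZMod.isPrimitive_stdAddChar _), sum_tmul,
          smul_tmul']

theorem comm_Rmat : Algebra.TensorProduct.comm ℂ (QG N) (QG N) (Rmat N) = Rmat N := by
  rw [Rmat_eq_sum_fourierIdempotent, map_sum]
  refine Fintype.sum_equiv (Equiv.prodComm _ _) _ _ fun p => ?_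
  rw [map_smul, Algebra.TensorProduct.comm_tmul, Equiv.prodComm_apply, Prod.fst_swap,
    Prod.snd_swap, mul_comm p.1]

theorem velInv_eq_sum_fourierIdempotent (hN : Even N) :
    velInv N = ∑ m, ψ (-(m * m)) • fourierIdempotent ψ m := by
  obtain ⟨h, hh⟩ := id hN
  set H : ZMod (2 * N) := ((h : ℕ) : ZMod (2 * N))
  have hH : (N : ZMod (2 * N)) = H + H := by
    rw [← Nat.cast_add, ← hh]
  -- With `N = 2H`: `kN - k² = H² - (k - H)²` and `jN + j² + m(2j + N) = (j + H + m)² - H² - m²`.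
  have hscalar : ∑ k ∈ range N, (-1 : ℂ) ^ k * tq N ^ (-((k : ℤ) ^ 2)) =
      2⁻¹ * ψ (H * H) * quadGaussSum N (-1) := by
    rw [← sum_range_stdAddChar_quadratic hN (-1) (-H)]
    refine Finset.sum_congr rfl fun k _ => ?_
    rw [← stdAddChar_natCast_self (N := N), ← AddChar.map_nsmul_eq_pow, tq_zpow,
      ← AddChar.map_add_eq_mul]
    congr 1
    push_cast
    linear_combination (k : ZMod (2 * N)) * hH
  have hvector : ∑ j ∈ range N,
      ((-1 : ℂ) ^ j * tq N ^ (j ^ 2)) • KK N ((2 * j + N : ℕ) : ZMod (2 * N)) =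
      ∑ m, (2⁻¹ * ψ (-(H * H) - m * m) * quadGaussSum N 1) •
        fourierIdempotent ψ m := by
    simp only [KK, single_eq_sum_fourierIdempotent (ZMod.isPrimitive_stdAddChar _),
      Finset.smul_sum, smul_smul]
    rw [Finset.sum_comm]
    refine Finset.sum_congr rfl fun m _ => ?_
    rw [← Finset.sum_smul, ← sum_range_stdAddChar_quadratic hN 1 (H + m)]
    congr 1
    refine Finset.sum_congr rfl fun j _ => ?_
    rw [← stdAddChar_natCast_self (N := N), ← AddChar.map_nsmul_eq_pow, tq_pow,
      ← AddChar.map_add_eq_mul, ← AddChar.map_add_eq_mul]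
    congr 1
    push_cast
    linear_combination ((j : ZMod (2 * N)) + m) * hH
  rw [velInv, hscalar, hvector, Finset.smul_sum]
  refine Finset.sum_congr rfl fun m _ => ?_
  rw [smul_smul]
  congr 1
  have hG := quadGaussSum_one_mul_quadGaussSum_neg_one hN
  have hchar : ψ (H * H) * ψ (-(H * H) - m * m) = ψ (-(m * m)) := by
    rw [← AddChar.map_add_eq_mul]
    ring_nf
  linear_combination ((N : ℂ)⁻¹ * 4⁻¹ * ψ (H * H) * ψ (-(H * H) - m * m)) * hG
    + hchar + ψ (H * H) * ψ (-(H * H) - m * m) * inv_mul_cancel₀ (NeZero.ne (N : ℂ))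

end RibbonElement

/-- **`(A, R, v)` is a ribbon Hopf algebra**: `v` is invertible with the stated inverse,
`S(v) = v`, and `Δ(v) = P(R)·R·(v ⊗ v)`. -/
theorem stmt_1 (N : ℕ) (hpos : 0 < N) (hN : Even N) :
    vel N * velInv N = 1 ∧ velInv N * vel N = 1 ∧
    SQG N (vel N) = vel N ∧
    DeltaQG N (vel N)
      = (Algebra.TensorProduct.comm ℂ (QG N) (QG N)) (Rmat N) * Rmat N *
          (vel N ⊗ₜ[ℂ] vel N) := by
  have : NeZero N := ⟨hpos.ne'⟩
  have hψ := ZMod.isPrimitive_stdAddChar (2 * N)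
  have he := completeOrthogonalIdempotents_fourierIdempotent hψ
  have hinv : vel N * velInv N = 1 := by
    rw [vel_eq_sum_fourierIdempotent, velInv_eq_sum_fourierIdempotent hN,
      he.sum_smul_mul_sum_smul, ← he.complete]
    simp [← AddChar.map_add_eq_mul]
  refine ⟨hinv, (mul_comm _ _).trans hinv, ?_, ?_⟩
  · rw [vel_eq_sum_fourierIdempotent, map_sum]
    simp only [map_smul, map_fourierIdempotent_eq_fourierIdempotent_neg _ SQG_single]
    exact Fintype.sum_equiv (Equiv.neg _) _ _ fun m => by simp
  · have he₂ := he.tmul he.toOrthogonalIdempotents (R := ℂ)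
    rw [comm_Rmat, vel_eq_sum_fourierIdempotent,
      map_sum_smul_fourierIdempotent_eq_sum_tmul hψ _ DeltaQG_single,
      TensorProduct.sum_smul_tmul_sum_smul, Rmat_eq_sum_fourierIdempotent,
      he₂.sum_smul_mul_sum_smul, he₂.sum_smul_mul_sum_smul]
    refine Finset.sum_congr rfl fun p _ => ?_
    simp only [← AddChar.map_add_eq_mul]
    ring_nf
end
end

section
/- In A ⊗ A one has the identity R² = (1/N) Σ_{j,k=0}^{N−1} t^{−2jk} K^{2j} ⊗ K^{2k}. -/
open Finset TensorProduct

noncomputable section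

/-!
Write `P a = (1/2N) Σ_k t^{-ak} K^k` (`eigenProj`). Then `K^k P a = t^{ak} P a`, so by
orthogonality of characters (`m ↦ t^m` is the standard additive character of `ℤ_{2N}`) the
`P a` are orthogonal idempotents, and `R = Σ_a K^a ⊗ P a` gives `R² = Σ_a K^{2a} ⊗ P a`.
As `K^{2a}` only depends on `a mod N`, pair `a` with `a + N`: since `t^{-Nk} = (-1)^k`, the odd
powers of `K` cancel in `P a + P (a + N) = (1/N) Σ_k t^{-2ak} K^{2k}`.
-/

open MonoidAlgebra

section EigenProj

variable {R : Type*} [CommRing R] [Fintype R]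

def eigenProj (ψ : AddChar R ℂ) (a : R) : MonoidAlgebra ℂ (Multiplicative R) :=
  (Fintype.card R : ℂ)⁻¹ • ∑ k, ψ (-(a * k)) • single (Multiplicative.ofAdd k) 1

lemma single_mul_eigenProj (ψ : AddChar R ℂ) (k a : R) :
    single (Multiplicative.ofAdd k) 1 * eigenProj ψ a = ψ (a * k) • eigenProj ψ a := by
  have reindex : ∑ l, ψ (-(a * l)) • single (Multiplicative.ofAdd (k + l)) (1 : ℂ) =
      ψ (a * k) • ∑ m, ψ (-(a * m)) • single (Multiplicative.ofAdd m) 1 := by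
    rw [smul_sum]
    exact Fintype.sum_equiv (Equiv.addLeft k) _ _ fun l => by
      rw [smul_smul, ← AddChar.map_add_eq_mul, Equiv.coe_addLeft]
      ring_nf
  rw [eigenProj, mul_smul_comm, mul_sum]
  simp only [mul_smul_comm, single_mul_single, one_mul, ← ofAdd_add]
  rw [reindex, smul_comm]

lemma eigenProj_mul_eigenProj [DecidableEq R] {ψ : AddChar R ℂ} (hψ : ψ.IsPrimitive)
    (a b : R) :
    eigenProj ψ a * eigenProj ψ b = if a = b then eigenProj ψ b else 0 := by
  have hsum :
      ∑ k : R, ψ (-(a * k)) * ψ (b * k) = if a = b then (Fintype.card R : ℂ) else 0 := by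
    simp_rw [← AddChar.map_add_eq_mul,
      show ∀ k, -(a * k) + b * k = k * (b - a) from fun k => by ring]
    rw [AddChar.sum_mulShift _ hψ]
    simp [sub_eq_zero, eq_comm]
  conv_lhs => rw [eigenProj]
  simp only [smul_mul_assoc, sum_mul, single_mul_eigenProj, smul_smul, ← sum_smul, hsum]
  split_ifs <;> simp [Fintype.card_ne_zero]

lemma sum_single_tmul_eigenProj_mul_self [DecidableEq R] {ψ : AddChar R ℂ}
    (hψ : ψ.IsPrimitive) :
    (∑ a, single (Multiplicative.ofAdd a) (1 : ℂ) ⊗ₜ[ℂ] eigenProj ψ a) *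
        (∑ a, single (Multiplicative.ofAdd a) (1 : ℂ) ⊗ₜ[ℂ] eigenProj ψ a) =
      ∑ a, single (Multiplicative.ofAdd (2 * a)) (1 : ℂ) ⊗ₜ[ℂ] eigenProj ψ a := by
  simp only [sum_mul_sum, Algebra.TensorProduct.tmul_mul_tmul, single_mul_single, one_mul,
    eigenProj_mul_eigenProj hψ, tmul_ite, sum_ite_eq, mem_univ, if_true, ← ofAdd_add, two_mul]

end EigenProj

lemma sum_zmod_eq_sum_range {n : ℕ} [NeZero n] {M : Type*} [AddCommMonoid M]
    (f : ZMod n → M) :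
    ∑ a, f a = ∑ m ∈ range n, f m :=
  (sum_nbij' ((↑) : ℕ → ZMod n) ZMod.val (fun _ _ => mem_univ _)
    (fun a _ => mem_range.2 a.val_lt) (fun _ hm => ZMod.val_cast_of_lt (mem_range.1 hm))
    (fun a _ => ZMod.natCast_zmod_val a) (fun _ _ => rfl)).symm

lemma sum_range_two_mul_one_add_neg_one_pow_smul {S M : Type*} [Ring S] [AddCommGroup M]
    [Module S M] (n : ℕ) (f : ℕ → M) :
    ∑ k ∈ range (2 * n), (1 + (-1 : S) ^ k) • f k =
      (2 : S) • ∑ k ∈ range n, f (2 * k) := by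
  induction n with
  | zero => simp
  | succ n ih =>
    rw [mul_add_one, sum_range_succ, sum_range_succ, ih, sum_range_succ, smul_add,
      pow_succ, pow_mul]
    simp [one_add_one_eq_two]

section Cyclic

variable {N : ℕ}

lemma tq_ne_zero : tq N ≠ 0 := Complex.exp_ne_zero _

variable [NeZero N]

lemma natCast_card_zmod_two_mul : (Fintype.card (ZMod (2 * N)) : ℂ) = 2 * N := by
  simp [ZMod.card]

lemma tq_zpow_eq_stdAddChar (x : ℤ) : tq N ^ x = ZMod.stdAddChar (x : ZMod (2 * N)) := by
  have hN : (N : ℂ) ≠ 0 := NeZero.ne _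
  rw [ZMod.stdAddChar_coe, tq, ← Complex.exp_int_mul]
  congr 1
  push_cast
  field_simp

lemma stdAddChar_neg_natCast_mul (j k : ℕ) :
    ZMod.stdAddChar (-((j : ZMod (2 * N)) * (k : ZMod (2 * N)))) = tq N ^ (-((j : ℤ) * k)) := by
  rw [tq_zpow_eq_stdAddChar]
  push_cast
  ring_nf

lemma tq_pow_self : tq N ^ N = -1 := by
  have hN : (N : ℂ) ≠ 0 := NeZero.ne _
  rw [tq, ← Complex.exp_nat_mul, mul_div_cancel₀ _ hN, Complex.exp_pi_mul_I]

lemma tq_zpow_neg_self_mul (k : ℕ) : tq N ^ (-((N : ℤ) * k)) = (-1) ^ k := by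
  rw [zpow_neg, zpow_mul, zpow_natCast, zpow_natCast, tq_pow_self, ← inv_pow, inv_neg_one]

lemma Rmat_eq_sum_tmul_eigenProj :
    Rmat N = ∑ a, KK N a ⊗ₜ[ℂ] eigenProj ZMod.stdAddChar a := by
  simp only [eigenProj, natCast_card_zmod_two_mul, tmul_smul, tmul_sum, ← smul_sum]
  rw [Rmat, sum_zmod_eq_sum_range]
  refine congrArg _ (sum_congr rfl fun j _ => ?_)
  rw [sum_zmod_eq_sum_range]
  refine sum_congr rfl fun k _ => ?_
  rw [stdAddChar_neg_natCast_mul]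
  rfl

lemma eigenProj_add_eigenProj_self_add (j : ℕ) :
    eigenProj ZMod.stdAddChar (j : ZMod (2 * N)) +
        eigenProj ZMod.stdAddChar ((N + j : ℕ) : ZMod (2 * N)) =
      (N : ℂ)⁻¹ • ∑ k ∈ range N,
        tq N ^ (-(2 * (j : ℤ) * (k : ℤ))) • KK N ((2 * k : ℕ) : ZMod (2 * N)) := by
  have hterm : ∀ k : ℕ,
      tq N ^ (-((j : ℤ) * k)) • KK N k + tq N ^ (-(((N + j : ℕ) : ℤ) * k)) • KK N k =
        (1 + (-1 : ℂ) ^ k) • tq N ^ (-((j : ℤ) * k)) • KK N k := by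
    intro k
    rw [smul_smul, add_mul, one_mul, add_smul, ← tq_zpow_neg_self_mul (N := N),
      ← zpow_add₀ tq_ne_zero]
    congr 3
    push_cast
    ring
  simp only [eigenProj, natCast_card_zmod_two_mul, ← smul_add, ← sum_add_distrib,
    sum_zmod_eq_sum_range, stdAddChar_neg_natCast_mul]
  calc (2 * N : ℂ)⁻¹ • ∑ k ∈ range (2 * N), _
      = (2 * N : ℂ)⁻¹ •
          ∑ k ∈ range (2 * N), (1 + (-1 : ℂ) ^ k) • tq N ^ (-((j : ℤ) * k)) • KK N k :=
        congrArg _ (sum_congr rfl fun k _ => hterm k)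
    _ = _ := by
      rw [sum_range_two_mul_one_add_neg_one_pow_smul, smul_smul, mul_inv_rev,
        inv_mul_cancel_right₀ two_ne_zero]
      refine congrArg _ (sum_congr rfl fun k _ => ?_)
      push_cast
      ring_nf

lemma sum_tmul_two_mul_eigenProj :
    ∑ a : ZMod (2 * N), KK N (2 * a) ⊗ₜ[ℂ] eigenProj ZMod.stdAddChar a =
      (N : ℂ)⁻¹ • ∑ j ∈ range N, ∑ k ∈ range N,
        tq N ^ (-(2 * (j : ℤ) * (k : ℤ))) •
          (KK N ((2 * j : ℕ) : ZMod (2 * N)) ⊗ₜ[ℂ] KK N ((2 * k : ℕ) : ZMod (2 * N))) := by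
  have hdouble : ∀ j : ℕ, 2 * ((j : ℕ) : ZMod (2 * N)) = ((2 * j : ℕ) : ZMod (2 * N)) := by
    intro j
    push_cast
    ring
  have hperiod :
      ∀ j : ℕ, 2 * ((N + j : ℕ) : ZMod (2 * N)) = ((2 * j : ℕ) : ZMod (2 * N)) := by
    intro j
    have h2N := ZMod.natCast_self (2 * N)
    push_cast at h2N ⊢
    linear_combination h2N
  rw [sum_zmod_eq_sum_range, show range (2 * N) = range (N + N) by rw [two_mul], sum_range_add,
    ← sum_add_distrib, smul_sum]
  refine sum_congr rfl fun j _ => ?_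
  rw [hdouble, hperiod, ← tmul_add, eigenProj_add_eigenProj_self_add, tmul_smul,
    tmul_sum]
  simp only [tmul_smul]

end Cyclic

theorem stmt_11_general (N : ℕ) (hpos : 0 < N) :
    Rmat N * Rmat N
      = (N : ℂ)⁻¹ • ∑ j ∈ Finset.range N, ∑ k ∈ Finset.range N,
          tq N ^ (-(2 * (j : ℤ) * (k : ℤ))) •
            (KK N ((2 * j : ℕ) : ZMod (2 * N)) ⊗ₜ[ℂ] KK N ((2 * k : ℕ) : ZMod (2 * N))) := by
  have : NeZero N := ⟨hpos.ne'⟩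
  rw [Rmat_eq_sum_tmul_eigenProj, ← sum_tmul_two_mul_eigenProj]
  exact sum_single_tmul_eigenProj_mul_self (ZMod.isPrimitive_stdAddChar _)

/-- In `A ⊗ A` one has `R² = (1/N) Σ_{j,k=0}^{N−1} t^{−2jk} K^{2j} ⊗ K^{2k}`. -/
theorem stmt_11 (N : ℕ) (hpos : 0 < N) (hN : Even N) :
    Rmat N * Rmat N
      = (N : ℂ)⁻¹ • ∑ j ∈ Finset.range N, ∑ k ∈ Finset.range N,
          tq N ^ (-(2 * (j : ℤ) * (k : ℤ))) •
            (KK N ((2 * j : ℕ) : ZMod (2 * N)) ⊗ₜ[ℂ] KK N ((2 * k : ℕ) : ZMod (2 * N))) :=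
  stmt_11_general N hpos
end
end
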